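/- arXiv:1004.1506 — 4 statements merged into one kernel-verified Lean document; each statement's English description precedes it below -/
import Mathlib

section
/- The Poincaré distance on the unit disc satisfies ω(z, w) = arctanh(|(z - w)/(1 - conj(w)·z)|) for all z, w ∈ Δ, where ω is the integrated distance of the infinitesimal Poincaré metric α(z, v) = |v|/(1 - |z|²). -/
open Complex Metric Set intervalIntegral

/-- The inverse hyperbolic tangent. -/
noncomputable def arctanh (x : ℝ) : ℝ := (1/2) * Real.log ((1 + x) / (1 - x))

/-- The infinitesimal Poincaré metric on the unit disc. -/
noncomputable def poincareMetric (z v : ℂ) : ℝ :=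
  ‖v‖ / (1 - ‖z‖^2)

/-- The length of a curve `γ : [0,1] → Δ` for the Poincaré metric. -/
noncomputable def poincareLength (γ : ℝ → ℂ) : ℝ :=
  ∫ t in (0:ℝ)..1, poincareMetric (γ t) (deriv γ t)

/-- The integrated Poincaré distance on the unit disc. -/
noncomputable def poincareDistance (z w : ℂ) : ℝ :=
  sInf {L : ℝ | ∃ γ : ℝ → ℂ, ContDiffOn ℝ 1 γ (Icc 0 1) ∧
    MapsTo γ (Icc 0 1) (ball 0 1) ∧ γ 0 = z ∧ γ 1 = w ∧ L = poincareLength γ}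

/-!
Möbius maps `ζ ↦ u (ζ - a) / (1 - ā ζ)` with `|u| = 1` and `|a| < 1` are isometries of the metric
`α`, hence preserve lengths of curves, and one of them sends `z` to `0` and `w` to
`ρ = |(w - z) / (1 - z̄ w)|`. Along any curve `c` in `Δ`,
`α(c, c') ≥ Re c' / (1 - (Re c)²) = (artanh ∘ Re ∘ c)'`, so every curve from `0` to `ρ` has length
at least `artanh ρ`; the segment `[0, ρ]` has length exactly `artanh ρ`.
-/

open ComplexConjugate MeasureTheory

noncomputable def mobius (a ζ : ℂ) : ℂ := (ζ - a) / (1 - conj a * ζ)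

lemma one_sub_conj_mul_ne_zero {a ζ : ℂ} (ha : ‖a‖ < 1) (hζ : ‖ζ‖ < 1) : 1 - conj a * ζ ≠ 0 := by
  refine sub_ne_zero.2 fun h => ?_
  have : ‖conj a * ζ‖ < 1 := by
    rw [norm_mul, norm_conj]
    nlinarith [norm_nonneg a, norm_nonneg ζ]
  rw [← h, norm_one] at this
  exact lt_irrefl 1 this

lemma normSq_one_sub_conj_mul_sub_normSq_sub (a ζ : ℂ) :
    normSq (1 - conj a * ζ) - normSq (ζ - a) = (1 - normSq a) * (1 - normSq ζ) := by
  simp only [normSq_apply, sub_re, sub_im, mul_re, mul_im, conj_re, conj_im, one_re, one_im]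
  ring

lemma one_sub_norm_mobius_sq {a ζ : ℂ} (ha : ‖a‖ < 1) (hζ : ‖ζ‖ < 1) :
    1 - ‖mobius a ζ‖ ^ 2 = (1 - ‖a‖ ^ 2) * (1 - ‖ζ‖ ^ 2) / ‖1 - conj a * ζ‖ ^ 2 := by
  have hden : ‖1 - conj a * ζ‖ ^ 2 ≠ 0 := by
    simpa using one_sub_conj_mul_ne_zero ha hζ
  rw [mobius, norm_div, div_pow, eq_div_iff hden, sub_mul, div_mul_cancel₀ _ hden]
  simp only [Complex.sq_norm]
  linarith [normSq_one_sub_conj_mul_sub_normSq_sub a ζ]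

lemma norm_mobius_lt_one {a ζ : ℂ} (ha : ‖a‖ < 1) (hζ : ‖ζ‖ < 1) : ‖mobius a ζ‖ < 1 := by
  have : 0 < ‖1 - conj a * ζ‖ := norm_pos_iff.2 (one_sub_conj_mul_ne_zero ha hζ)
  have hpos : 0 < 1 - ‖mobius a ζ‖ ^ 2 := by
    rw [one_sub_norm_mobius_sq ha hζ]
    have : 0 < 1 - ‖a‖ ^ 2 := by nlinarith [norm_nonneg a]
    have : 0 < 1 - ‖ζ‖ ^ 2 := by nlinarith [norm_nonneg ζ]
    positivity
  nlinarith [norm_nonneg (mobius a ζ)]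

lemma norm_mobius_comm (a ζ : ℂ) : ‖mobius a ζ‖ = ‖mobius ζ a‖ := by
  rw [mobius, mobius, norm_div, norm_div, norm_sub_rev, ← norm_conj (1 - conj ζ * a)]
  congr 2
  simp [mul_comm]

lemma mobius_self (a : ℂ) : mobius a a = 0 := by simp [mobius]

lemma mobius_neg_zero (a : ℂ) : mobius (-a) 0 = a := by simp [mobius]

lemma mobius_neg_mobius {a ζ : ℂ} (ha : ‖a‖ < 1) (hζ : ‖ζ‖ < 1) : mobius (-a) (mobius a ζ) = ζ := by
  have hD := one_sub_conj_mul_ne_zero ha hζ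
  have hA := one_sub_conj_mul_ne_zero ha ha
  have hnum : (ζ - a) / (1 - conj a * ζ) - -a = ζ * (1 - conj a * a) / (1 - conj a * ζ) := by
    rw [eq_div_iff hD, sub_mul, div_mul_cancel₀ _ hD]
    ring
  have hden : 1 - conj (-a) * ((ζ - a) / (1 - conj a * ζ)) =
      (1 - conj a * a) / (1 - conj a * ζ) := by
    rw [eq_div_iff hD, sub_mul, map_neg, neg_mul, neg_mul, mul_assoc, div_mul_cancel₀ _ hD]
    ring
  rw [mobius, mobius, hnum, hden, div_div_div_cancel_right₀ hD, mul_div_assoc, div_self hA, mul_one]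

lemma hasDerivAt_mobius {a ζ : ℂ} (h : 1 - conj a * ζ ≠ 0) :
    HasDerivAt (mobius a) ((1 - conj a * a) / (1 - conj a * ζ) ^ 2) ζ := by
  have hnum : HasDerivAt (fun x : ℂ => x - a) 1 ζ := (hasDerivAt_id ζ).sub_const a
  have hden : HasDerivAt (fun x : ℂ => 1 - conj a * x) (-conj a) ζ := by
    simpa using ((hasDerivAt_id ζ).const_mul (conj a)).const_sub 1
  exact (hnum.div hden h).congr_deriv (by ring)

lemma contDiffOn_mobius {a : ℂ} {n : WithTop ℕ∞} (ha : ‖a‖ < 1) :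
    ContDiffOn ℂ n (mobius a) (ball 0 1) :=
  (contDiffOn_id.sub contDiffOn_const).div
    (contDiffOn_const.sub (contDiffOn_const.mul contDiffOn_id))
    fun _ hζ => one_sub_conj_mul_ne_zero ha (mem_ball_zero_iff.1 hζ)

lemma norm_one_sub_conj_mul_self {a : ℂ} (ha : ‖a‖ < 1) : ‖1 - conj a * a‖ = 1 - ‖a‖ ^ 2 := by
  rw [conj_mul', ← ofReal_pow, ← ofReal_one, ← ofReal_sub, norm_real, Real.norm_eq_abs,
    abs_of_nonneg (by nlinarith [norm_nonneg a])]

lemma poincareMetric_mobius {a ζ : ℂ} (ha : ‖a‖ < 1) (hζ : ‖ζ‖ < 1) (v : ℂ) :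
    poincareMetric (mobius a ζ) ((1 - conj a * a) / (1 - conj a * ζ) ^ 2 * v) =
      poincareMetric ζ v := by
  have hden : ‖1 - conj a * ζ‖ ≠ 0 := norm_ne_zero_iff.2 (one_sub_conj_mul_ne_zero ha hζ)
  have : 0 < 1 - ‖a‖ ^ 2 := by nlinarith [norm_nonneg a]
  rw [poincareMetric, poincareMetric, one_sub_norm_mobius_sq ha hζ, norm_mul, norm_div, norm_pow,
    norm_one_sub_conj_mul_self ha]
  field_simp

lemma poincareMetric_mul_left {u : ℂ} (hu : ‖u‖ = 1) (ζ v : ℂ) :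
    poincareMetric (u * ζ) (u * v) = poincareMetric ζ v := by
  simp [poincareMetric, hu]

lemma arctanh_zero : arctanh 0 = 0 := by simp [arctanh]

lemma hasDerivAt_arctanh {x : ℝ} (hx : |x| < 1) : HasDerivAt arctanh (1 / (1 - x ^ 2)) x := by
  obtain ⟨hx₁, hx₂⟩ := abs_lt.1 hx
  have hsub : 1 - x ≠ 0 := by linarith
  have hadd : 1 + x ≠ 0 := by linarith
  have hquot : HasDerivAt (fun y : ℝ => (1 + y) / (1 - y)) (2 / (1 - x) ^ 2) x :=
    (((hasDerivAt_id' x).const_add 1).div ((hasDerivAt_id' x).const_sub 1) hsub).congr_deriv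
      (by field_simp; ring)
  have hpos : (1 + x) / (1 - x) ≠ 0 := div_ne_zero hadd hsub
  have hsq : (1 : ℝ) - x ^ 2 ≠ 0 := by nlinarith
  exact ((hquot.log hpos).const_mul (1 / 2 : ℝ)).congr_deriv (by field_simp; ring)

lemma re_div_one_sub_re_sq_le_poincareMetric {ζ : ℂ} (hζ : ‖ζ‖ < 1) (v : ℂ) :
    v.re / (1 - ζ.re ^ 2) ≤ poincareMetric ζ v := by
  have hre : |ζ.re| ≤ ‖ζ‖ := abs_re_le_norm ζ
  have hpos : 0 < 1 - ‖ζ‖ ^ 2 := by nlinarith [norm_nonneg ζ]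
  have hle : 1 - ‖ζ‖ ^ 2 ≤ 1 - ζ.re ^ 2 := by nlinarith [abs_nonneg ζ.re, sq_abs ζ.re]
  rcases le_or_gt v.re 0 with hv | hv
  · exact (div_nonpos_of_nonpos_of_nonneg hv (hpos.le.trans hle)).trans
      (div_nonneg (norm_nonneg v) hpos.le)
  · exact div_le_div₀ (norm_nonneg v) (re_le_norm v) hpos hle

lemma poincareLength_mul_left {u : ℂ} (hu : ‖u‖ = 1) (γ : ℝ → ℂ) :
    poincareLength (fun t => u * γ t) = poincareLength γ := by
  simp only [poincareLength, deriv_const_mul_field', poincareMetric_mul_left hu]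

lemma poincareLength_mobius_comp {a : ℂ} (ha : ‖a‖ < 1) {γ : ℝ → ℂ}
    (hγ : ∀ t ∈ Ioo (0 : ℝ) 1, DifferentiableAt ℝ γ t) (hmaps : MapsTo γ (Ioo 0 1) (ball 0 1)) :
    poincareLength (fun t => mobius a (γ t)) = poincareLength γ := by
  refine integral_congr_Ioo_of_le zero_le_one fun t ht => ?_
  have hγt : ‖γ t‖ < 1 := mem_ball_zero_iff.1 (hmaps ht)
  have hcomp := (hasDerivAt_mobius (one_sub_conj_mul_ne_zero ha hγt)).comp t (hγ t ht).hasDerivAt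
  simp only [Function.comp_def] at hcomp
  rw [hcomp.deriv]
  exact poincareMetric_mobius ha hγt _

lemma integrableOn_poincareMetric_deriv {γ : ℝ → ℂ} (hγ : ContDiffOn ℝ 1 γ (Icc 0 1))
    (hmaps : MapsTo γ (Icc 0 1) (ball 0 1)) :
    IntegrableOn (fun t => poincareMetric (γ t) (deriv γ t)) (Icc 0 1) := by
  have hcont : ContinuousOn (fun t => poincareMetric (γ t) (derivWithin γ (Icc 0 1) t))
      (Icc 0 1) := by
    refine (hγ.continuousOn_derivWithin (uniqueDiffOn_Icc zero_lt_one) le_rfl).norm.div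
      (continuousOn_const.sub (hγ.continuousOn.norm.pow 2)) fun t ht => ?_
    have := mem_ball_zero_iff.1 (hmaps ht)
    nlinarith [norm_nonneg (γ t)]
  rw [integrableOn_Icc_iff_integrableOn_Ioo]
  refine ((hcont.integrableOn_Icc).mono_set Ioo_subset_Icc_self).congr_fun
    (fun t ht => ?_) measurableSet_Ioo
  simp only [derivWithin_of_mem_nhds (Icc_mem_nhds ht.1 ht.2)]

lemma arctanh_re_sub_le_poincareLength {γ : ℝ → ℂ} (hγ : ContDiffOn ℝ 1 γ (Icc 0 1))
    (hmaps : MapsTo γ (Icc 0 1) (ball 0 1)) :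
    arctanh (γ 1).re - arctanh (γ 0).re ≤ poincareLength γ := by
  have hnorm : ∀ t ∈ Icc (0 : ℝ) 1, ‖γ t‖ < 1 := fun t ht => mem_ball_zero_iff.1 (hmaps ht)
  have hre : ∀ t ∈ Icc (0 : ℝ) 1, |(γ t).re| < 1 := fun t ht =>
    (abs_re_le_norm _).trans_lt (hnorm t ht)
  refine sub_le_integral_of_hasDeriv_right_of_le zero_le_one (g := fun t => arctanh (γ t).re)
    (g' := fun t => (deriv γ t).re / (1 - (γ t).re ^ 2)) (fun t ht => ?_) (fun t ht => ?_)
    (integrableOn_poincareMetric_deriv hγ hmaps)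
    (fun t ht => re_div_one_sub_re_sq_le_poincareMetric (hnorm t (Ioo_subset_Icc_self ht)) _)
  · exact (hasDerivAt_arctanh (hre t ht)).continuousAt.comp_continuousWithinAt
      (f := fun s => (γ s).re) (continuous_re.comp_continuousOn hγ.continuousOn t ht)
  · have hγt : HasDerivAt γ (deriv γ t) t :=
      ((hγ.differentiableOn one_ne_zero).differentiableAt (Icc_mem_nhds ht.1 ht.2)).hasDerivAt
    have hret : HasDerivAt (fun s => (γ s).re) (deriv γ t).re t :=
      reCLM.hasFDerivAt.comp_hasDerivAt t hγt
    have hG := (hasDerivAt_arctanh (hre t (Ioo_subset_Icc_self ht))).comp t hret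
    rw [one_div_mul_eq_div] at hG
    exact hG.hasDerivWithinAt

lemma poincareLength_segment {p : ℂ} (hp : ‖p‖ < 1) :
    poincareLength (fun t : ℝ => t * p) = arctanh ‖p‖ := by
  have hsmall : ∀ t ∈ uIcc (0 : ℝ) 1, |‖p‖ * t| < 1 := fun t ht => by
    rw [uIcc_of_le zero_le_one] at ht
    rw [abs_of_nonneg (mul_nonneg (norm_nonneg p) ht.1)]
    nlinarith [ht.2, norm_nonneg p]
  have hmetric : ∀ t : ℝ, poincareMetric (t * p) (deriv (fun t : ℝ => t * p) t) =
      1 / (1 - (‖p‖ * t) ^ 2) * ‖p‖ := fun t => by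
    rw [(hasDerivAt_mul_const p).comp_ofReal.deriv, poincareMetric, norm_mul, norm_real,
      Real.norm_eq_abs, mul_pow, sq_abs]
    ring
  have hderiv : ∀ t ∈ uIcc (0 : ℝ) 1, HasDerivAt (fun s => arctanh (‖p‖ * s))
      (1 / (1 - (‖p‖ * t) ^ 2) * ‖p‖) t := fun t ht =>
    (hasDerivAt_arctanh (hsmall t ht)).comp t
      ((hasDerivAt_id' t).const_mul ‖p‖ |>.congr_deriv (mul_one _))
  rw [poincareLength]
  simp only [hmetric]
  rw [integral_eq_sub_of_hasDerivAt hderiv]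
  · simp [arctanh_zero]
  · refine ContinuousOn.intervalIntegrable fun t ht => ContinuousAt.continuousWithinAt ?_
    have hne : 1 - (‖p‖ * t) ^ 2 ≠ 0 := by
      nlinarith [hsmall t ht, abs_nonneg (‖p‖ * t), sq_abs (‖p‖ * t)]
    fun_prop (disch := exact hne)

lemma exists_norm_eq_one_mul_eq_norm (p : ℂ) : ∃ u : ℂ, ‖u‖ = 1 ∧ u * p = ‖p‖ := by
  refine ⟨exp (-arg p * I), by simpa using norm_exp_ofReal_mul_I (-arg p), ?_⟩
  nth_rewrite 2 [← norm_mul_exp_arg_mul_I p]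
  rw [mul_left_comm, ← exp_add, neg_mul, neg_add_cancel, exp_zero, mul_one]

lemma arctanh_norm_mobius_le_poincareLength {γ : ℝ → ℂ} (hγ : ContDiffOn ℝ 1 γ (Icc 0 1))
    (hmaps : MapsTo γ (Icc 0 1) (ball 0 1)) :
    arctanh ‖mobius (γ 0) (γ 1)‖ ≤ poincareLength γ := by
  have h0 : ‖γ 0‖ < 1 := mem_ball_zero_iff.1 (hmaps (left_mem_Icc.2 zero_le_one))
  obtain ⟨u, hu, hup⟩ := exists_norm_eq_one_mul_eq_norm (mobius (γ 0) (γ 1))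
  set f : ℝ → ℂ := fun t => u * mobius (γ 0) (γ t) with hf
  have hfsmooth : ContDiffOn ℝ 1 f (Icc 0 1) :=
    contDiffOn_const.mul (((contDiffOn_mobius h0).restrict_scalars ℝ).comp hγ hmaps)
  have hfmaps : MapsTo f (Icc 0 1) (ball 0 1) := fun t ht => by
    simpa [f, hu] using norm_mobius_lt_one h0 (mem_ball_zero_iff.1 (hmaps ht))
  calc arctanh ‖mobius (γ 0) (γ 1)‖ = arctanh (f 1).re - arctanh (f 0).re := by
        simp [f, hup, mobius_self, arctanh_zero]
    _ ≤ poincareLength f := arctanh_re_sub_le_poincareLength hfsmooth hfmaps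
    _ = poincareLength γ := by
        rw [hf, poincareLength_mul_left hu, poincareLength_mobius_comp h0
          (fun t ht => (hγ.differentiableOn one_ne_zero).differentiableAt (Icc_mem_nhds ht.1 ht.2))
          (hmaps.mono_left Ioo_subset_Icc_self)]

lemma exists_poincareLength_eq_arctanh_norm_mobius {z w : ℂ} (hz : ‖z‖ < 1) (hw : ‖w‖ < 1) :
    ∃ γ : ℝ → ℂ, ContDiffOn ℝ 1 γ (Icc 0 1) ∧ MapsTo γ (Icc 0 1) (ball 0 1) ∧
      γ 0 = z ∧ γ 1 = w ∧ poincareLength γ = arctanh ‖mobius z w‖ := by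
  set p := mobius z w
  have hp : ‖p‖ < 1 := norm_mobius_lt_one hz hw
  have hz' : ‖-z‖ < 1 := by rwa [norm_neg]
  have hseg : MapsTo (fun t : ℝ => (t : ℂ) * p) (Icc 0 1) (ball 0 1) := fun t ht => by
    rw [mem_ball_zero_iff, norm_mul, norm_real, Real.norm_of_nonneg ht.1]
    nlinarith [ht.2, norm_nonneg p]
  refine ⟨fun t => mobius (-z) (t * p),
    ((contDiffOn_mobius hz').restrict_scalars ℝ).comp
      (ofRealCLM.contDiff.mul contDiff_const).contDiffOn hseg,
    fun t ht => mem_ball_zero_iff.2 (norm_mobius_lt_one hz' (mem_ball_zero_iff.1 (hseg ht))),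
    by simp [mobius_neg_zero], by simp [p, mobius_neg_mobius hz hw], ?_⟩
  rw [poincareLength_mobius_comp hz' (fun t _ => by fun_prop) (hseg.mono_left Ioo_subset_Icc_self),
    poincareLength_segment hp]

theorem poincare_distance_formula (z w : ℂ)
    (hz : z ∈ ball (0 : ℂ) 1) (hw : w ∈ ball (0 : ℂ) 1) :
    poincareDistance z w =
      arctanh ‖(z - w) / (1 - (starRingEnd ℂ) w * z)‖ := by
  rw [mem_ball_zero_iff] at hz hw
  change sInf _ = arctanh ‖mobius w z‖
  rw [← norm_mobius_comm]
  refine IsLeast.csInf_eq ⟨?_, ?_⟩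
  · obtain ⟨γ, hγ, hmaps, h0, h1, hlength⟩ := exists_poincareLength_eq_arctanh_norm_mobius hz hw
    exact ⟨γ, hγ, hmaps, h0, h1, hlength.symm⟩
  · rintro L ⟨γ, hγ, hmaps, rfl, rfl, rfl⟩
    exact arctanh_norm_mobius_le_poincareLength hγ hmaps
end

section
/- Let U be an open subset of ℂⁿ and ρ: U → U a holomorphic retraction (ρ∘ρ = ρ) with fixed point z₀. Then there is a local biholomorphic chart u from a neighborhood of z₀ onto a neighborhood V of 0 with u(z₀) = 0 such that u∘ρ∘u⁻¹ is the restriction to V of a linear projection. In particular, ρ(U) is a complex analytic submanifold of U near z₀. -/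
/-!
Holomorphic maps of several variables are `C¹`: on each complex line, Cauchy's estimate bounds
`(f' y - f' a) v` by the size of `f (y + ·) - f (a + ·)` on a sphere, which is small by uniform
continuity of `f` on a compact ball.

For the retraction, `P = ρ'(z₀)` is idempotent by the chain rule applied to `ρ ∘ ρ = ρ`.
The chart `u = (1 - P) (id - ρ) + P (ρ - z₀)` has `u'(z₀) = 1`, and `u ∘ ρ = P ∘ u` because
`ρ - ρ ∘ ρ = 0` and `P (1 - P) = 0`. By the inverse function theorem `u` is biholomorphic near
`z₀`, and its injectivity turns `u (ρ z) = u z` into `ρ z = z`.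
-/

open Metric Set Filter Topology

section Holomorphic

variable {E F : Type*} [NormedAddCommGroup E] [NormedSpace ℂ E]
  [NormedAddCommGroup F] [NormedSpace ℂ F]

theorem norm_fderiv_apply_sub_fderiv_apply_le {f : E → F} {s : Set E}
    (hf : DifferentiableOn ℂ f s) {x y : E} {R C : ℝ} (hR : 0 < R)
    (hx : closedBall x R ⊆ s) (hy : closedBall y R ⊆ s)
    (hC : ∀ w : E, ‖w‖ = R → ‖f (x + w) - f (y + w)‖ ≤ C) (v : E) :
    ‖fderiv ℂ f x v - fderiv ℂ f y v‖ ≤ C / R * ‖v‖ := by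
  rcases eq_or_ne v 0 with rfl | hv
  · simp
  have hvpos : 0 < ‖v‖ := norm_pos_iff.mpr hv
  have hline : ∀ z, closedBall z R ⊆ s → ∀ t ∈ closedBall (0 : ℂ) (R / ‖v‖),
      z + t • v ∈ s := fun z hz t ht => hz <| by
    rw [mem_closedBall_zero_iff, le_div_iff₀ hvpos] at ht
    simpa [norm_smul] using ht
  have hderiv : ∀ z, closedBall z R ⊆ s →
      HasDerivAt (fun t : ℂ => f (z + t • v)) (fderiv ℂ f z v) 0 := fun z hz => by
    have hfz : HasFDerivAt f (fderiv ℂ f z) (z + (0 : ℂ) • v) := by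
      rw [zero_smul, add_zero]
      exact (hf.differentiableAt (mem_of_superset (closedBall_mem_nhds z hR) hz)).hasFDerivAt
    simpa [Function.comp_def] using
      hfz.comp_hasDerivAt 0 (((hasDerivAt_id (0 : ℂ)).smul_const v).const_add z)
  set g : ℂ → F := fun t => f (x + t • v) - f (y + t • v)
  have hg : DiffContOnCl ℂ g (ball 0 (R / ‖v‖)) := by
    refine DifferentiableOn.diffContOnCl ?_
    rw [closure_ball _ (by positivity : R / ‖v‖ ≠ 0)]
    have hlin : Differentiable ℂ fun t : ℂ => t • v := differentiable_id.smul_const v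
    exact (hf.comp (hlin.const_add x).differentiableOn (hline x hx)).sub
      (hf.comp (hlin.const_add y).differentiableOn (hline y hy))
  have hgC : ∀ t ∈ sphere (0 : ℂ) (R / ‖v‖), ‖g t‖ ≤ C := fun t ht => by
    rw [mem_sphere_zero_iff_norm] at ht
    exact hC _ (by rw [norm_smul, ht, div_mul_cancel₀ _ hvpos.ne'])
  have hcauchy := Complex.norm_deriv_le_of_forall_mem_sphere_norm_le (by positivity) hg hgC
  have hgder : HasDerivAt g (fderiv ℂ f x v - fderiv ℂ f y v) 0 :=
    (hderiv x hx).sub (hderiv y hy)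
  rwa [hgder.deriv, div_div_eq_mul_div, mul_div_right_comm] at hcauchy

theorem DifferentiableOn.continuousAt_fderiv [ProperSpace E] {f : E → F} {U : Set E}
    (hf : DifferentiableOn ℂ f U) (hU : IsOpen U) {a : E} (ha : a ∈ U) :
    ContinuousAt (fderiv ℂ f) a := by
  obtain ⟨R, hR, hRU⟩ : ∃ R > 0, closedBall a (2 * R) ⊆ U := by
    obtain ⟨ε, hε, h⟩ := nhds_basis_closedBall.mem_iff.mp (hU.mem_nhds ha)
    exact ⟨ε / 2, by positivity, by rwa [mul_div_cancel₀ _ two_ne_zero]⟩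
  have hunif := (isCompact_closedBall a (2 * R)).uniformContinuousOn_of_continuous
    (hf.continuousOn.mono hRU)
  rw [Metric.continuousAt_iff]
  intro η hη
  obtain ⟨θ, hθ, hfθ⟩ := Metric.uniformContinuousOn_iff.mp hunif (η / 2 * R) (by positivity)
  refine ⟨min R θ, lt_min hR hθ, fun y hy => ?_⟩
  have hyR : y ∈ closedBall a R :=
    (ball_subset_ball (min_le_left _ _)).trans ball_subset_closedBall hy
  have haR : a ∈ closedBall a R := mem_closedBall_self hR.le
  have hsub : ∀ z ∈ closedBall a R, closedBall z R ⊆ closedBall a (2 * R) := fun z hz =>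
    closedBall_subset_closedBall' (by rw [mem_closedBall] at hz; linarith)
  have hC : ∀ w : E, ‖w‖ = R → ‖f (y + w) - f (a + w)‖ ≤ η / 2 * R := fun w hw => by
    rw [← dist_eq_norm]
    refine (hfθ _ (hsub y hyR (by simp [hw])) _ (hsub a haR (by simp [hw])) ?_).le
    simpa using hy.trans_le (min_le_right _ _)
  rw [dist_eq_norm]
  refine lt_of_le_of_lt (ContinuousLinearMap.opNorm_le_bound _ (by positivity) fun v => ?_)
    (half_lt_self hη)
  have := norm_fderiv_apply_sub_fderiv_apply_le hf hR ((hsub y hyR).trans hRU)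
    ((hsub a haR).trans hRU) hC v
  rwa [mul_div_cancel_right₀ _ hR.ne'] at this

theorem DifferentiableOn.contDiffOn_one [ProperSpace E] {f : E → F} {U : Set E}
    (hf : DifferentiableOn ℂ f U) (hU : IsOpen U) : ContDiffOn ℂ 1 f U := by
  rw [show (1 : WithTop ℕ∞) = 0 + 1 from rfl, contDiffOn_succ_iff_fderiv_of_isOpen hU]
  exact ⟨hf, by simp, contDiffOn_zero.mpr fun a ha =>
    (hf.continuousAt_fderiv hU ha).continuousWithinAt⟩

end Holomorphic

theorem ContDiffOn.exists_openPartialHomeomorph {𝕜 E F : Type*} [RCLike 𝕜]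
    [NormedAddCommGroup E] [NormedSpace 𝕜 E] [CompleteSpace E]
    [NormedAddCommGroup F] [NormedSpace 𝕜 F] {f : E → F} {U : Set E}
    (hf : ContDiffOn 𝕜 1 f U) (hU : IsOpen U) {a : E} (ha : a ∈ U) {f' : E ≃L[𝕜] F}
    (hf' : HasFDerivAt f (f' : E →L[𝕜] F) a) :
    ∃ φ : OpenPartialHomeomorph E F, ⇑φ = f ∧ a ∈ φ.source ∧ φ.source ⊆ U ∧
      DifferentiableOn 𝕜 φ.symm φ.target := by
  have hstrict : HasStrictFDerivAt f (f' : E →L[𝕜] F) a :=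
    (hf.contDiffAt (hU.mem_nhds ha)).hasStrictFDerivAt' hf' one_ne_zero
  -- shrink the source to where `fderiv 𝕜 f` is invertible, so that `φ.symm` is differentiable
  set S := U ∩ fderiv 𝕜 f ⁻¹' range ((↑) : (E ≃L[𝕜] F) → E →L[𝕜] F)
  have hS : IsOpen S := (hf.continuousOn_fderiv_of_isOpen hU le_rfl).isOpen_inter_preimage hU
    ContinuousLinearEquiv.isOpen
  set φ := (hstrict.toOpenPartialHomeomorph f).restrOpen S hS
  refine ⟨φ, hstrict.toOpenPartialHomeomorph_coe, ⟨hstrict.mem_toOpenPartialHomeomorph_source,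
    ha, f', hf'.fderiv.symm⟩, fun z hz => hz.2.1, fun y hy => ?_⟩
  obtain ⟨-, hxU, e, he⟩ := φ.map_target hy
  have hφx : HasFDerivAt φ (e : E →L[𝕜] F) (φ.symm y) := by
    rw [he, show ⇑φ = f from hstrict.toOpenPartialHomeomorph_coe]
    exact ((hf.differentiableOn one_ne_zero).differentiableAt (hU.mem_nhds hxU)).hasFDerivAt
  exact (φ.hasFDerivAt_symm hy hφx).differentiableAt.differentiableWithinAt

section Retraction

variable {𝕜 E : Type*} [NontriviallyNormedField 𝕜] [NormedAddCommGroup E] [NormedSpace 𝕜 E]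

theorem fderiv_comp_fderiv_of_retraction {ρ : E → E} {z₀ : E}
    (hρ : DifferentiableAt 𝕜 ρ z₀) (hfix : ρ z₀ = z₀) (hretr : ρ ∘ ρ =ᶠ[𝓝 z₀] ρ) :
    fderiv 𝕜 ρ z₀ ∘L fderiv 𝕜 ρ z₀ = fderiv 𝕜 ρ z₀ := by
  have hcomp := fderiv_comp z₀ (hfix.symm ▸ hρ : DifferentiableAt 𝕜 ρ (ρ z₀)) hρ
  rw [hfix] at hcomp
  rw [← hcomp, hretr.fderiv_eq]

/-- The paper's chart `id + (2P - id) ∘ (ρ - P)`, recentred at `z₀`. -/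
def cartanChart (ρ : E → E) (P : E →L[𝕜] E) (z₀ z : E) : E :=
  (1 - P) (z - ρ z) + P (ρ z - z₀)

variable {ρ : E → E} {P : E →L[𝕜] E} {z₀ : E}

theorem cartanChart_self (hfix : ρ z₀ = z₀) : cartanChart ρ P z₀ z₀ = 0 := by
  simp [cartanChart, hfix]

theorem cartanChart_apply_retraction (hP : P ∘L P = P) {z : E} (hz : ρ (ρ z) = ρ z) :
    cartanChart ρ P z₀ (ρ z) = P (cartanChart ρ P z₀ z) := by
  have hPP : ∀ x, P (P x) = P x := DFunLike.congr_fun hP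
  simp [cartanChart, hz, hPP]

theorem hasFDerivAt_cartanChart (hρ : HasFDerivAt ρ P z₀) (hP : P ∘L P = P) :
    HasFDerivAt (cartanChart ρ P z₀) (ContinuousLinearMap.id 𝕜 E) z₀ := by
  have h := ((1 - P).hasFDerivAt.comp z₀ ((hasFDerivAt_id z₀).sub hρ)).add
    (P.hasFDerivAt.comp z₀ (hρ.sub_const z₀))
  convert h using 1
  · ext z
    simp [cartanChart]
  · ext x
    have hPP : P (P x) = P x := DFunLike.congr_fun hP x
    simp [hPP]

theorem DifferentiableOn.cartanChart {s : Set E} (hρ : DifferentiableOn 𝕜 ρ s) :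
    DifferentiableOn 𝕜 (cartanChart ρ P z₀) s :=
  ((1 - P).differentiable.comp_differentiableOn (differentiableOn_id.sub hρ)).add
    (P.differentiable.comp_differentiableOn (hρ.sub_const z₀))

end Retraction

theorem holomorphic_retraction_locally_linear_general
    {n : ℕ} (U : Set (Fin n → ℂ)) (hU : IsOpen U)
    (ρ : (Fin n → ℂ) → (Fin n → ℂ))
    (hρ : DifferentiableOn ℂ ρ U)
    (hretr : ∀ z ∈ U, ρ (ρ z) = ρ z)
    (z₀ : Fin n → ℂ) (hz₀ : z₀ ∈ U) (hfix : ρ z₀ = z₀) :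
    ∃ (W : Set (Fin n → ℂ)) (u uinv : (Fin n → ℂ) → (Fin n → ℂ))
      (P : (Fin n → ℂ) →L[ℂ] (Fin n → ℂ)),
      IsOpen W ∧ z₀ ∈ W ∧ W ⊆ U ∧
      u z₀ = 0 ∧
      DifferentiableOn ℂ u W ∧
      IsOpen (u '' W) ∧
      DifferentiableOn ℂ uinv (u '' W) ∧
      (∀ z ∈ W, uinv (u z) = z) ∧
      (∀ y ∈ u '' W, u (uinv y) = y) ∧
      P ∘L P = P ∧
      (∀ z ∈ W, u (ρ z) = P (u z)) ∧
      (∀ z ∈ W, (ρ z = z ↔ P (u z) = u z)) := by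
  have hρz₀ := hρ.differentiableAt (hU.mem_nhds hz₀)
  set P := fderiv ℂ ρ z₀
  have hP : P ∘L P = P := fderiv_comp_fderiv_of_retraction hρz₀ hfix
    (eventuallyEq_of_mem (hU.mem_nhds hz₀) hretr)
  have hu : DifferentiableOn ℂ (cartanChart ρ P z₀) U := hρ.cartanChart
  obtain ⟨φ, hφ, hz₀φ, hφU, hφsymm⟩ := (hu.contDiffOn_one hU).exists_openPartialHomeomorph hU
    hz₀ (f' := ContinuousLinearEquiv.refl ℂ _) (hasFDerivAt_cartanChart hρz₀.hasFDerivAt hP)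
  have hconj : ∀ z ∈ φ.source, φ (ρ z) = P (φ z) := fun z hz => by
    rw [hφ]; exact cartanChart_apply_retraction hP (hretr z (hφU hz))
  set W := φ.source ∩ ρ ⁻¹' φ.source
  have hW : IsOpen W :=
    (hρ.continuousOn.mono hφU).isOpen_inter_preimage φ.open_source φ.open_source
  refine ⟨W, φ, φ.symm, P, hW, ⟨hz₀φ, by rwa [mem_preimage, hfix]⟩,
    inter_subset_left.trans hφU, hφ ▸ cartanChart_self hfix,
    hφ ▸ hu.mono (inter_subset_left.trans hφU),
    φ.isOpen_image_of_subset_source hW inter_subset_left,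
    hφsymm.mono ((φ.mapsTo.mono_left inter_subset_left).image_subset),
    fun z hz => φ.left_inv hz.1, ?_, hP, fun z hz => hconj z hz.1, fun z hz => ?_⟩
  · rintro _ ⟨z, hz, rfl⟩
    rw [φ.left_inv hz.1]
  · rw [← hconj z hz.1]
    exact (φ.injOn.eq_iff hz.2 hz.1).symm

/-- Local linearization of a holomorphic retraction (H. Cartan). -/
theorem holomorphic_retraction_locally_linear
    {n : ℕ} (U : Set (Fin n → ℂ)) (hU : IsOpen U)
    (ρ : (Fin n → ℂ) → (Fin n → ℂ))
    (hρ : DifferentiableOn ℂ ρ U) (hρm : MapsTo ρ U U)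
    (hretr : ∀ z ∈ U, ρ (ρ z) = ρ z)
    (z₀ : Fin n → ℂ) (hz₀ : z₀ ∈ U) (hfix : ρ z₀ = z₀) :
    ∃ (W : Set (Fin n → ℂ)) (u uinv : (Fin n → ℂ) → (Fin n → ℂ))
      (P : (Fin n → ℂ) →L[ℂ] (Fin n → ℂ)),
      IsOpen W ∧ z₀ ∈ W ∧ W ⊆ U ∧
      u z₀ = 0 ∧
      DifferentiableOn ℂ u W ∧
      IsOpen (u '' W) ∧
      DifferentiableOn ℂ uinv (u '' W) ∧
      (∀ z ∈ W, uinv (u z) = z) ∧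
      (∀ y ∈ u '' W, u (uinv y) = y) ∧
      P ∘L P = P ∧
      (∀ z ∈ W, u (ρ z) = P (u z)) ∧
      (∀ z ∈ W, (ρ z = z ↔ P (u z) = u z)) :=
  holomorphic_retraction_locally_linear_general U hU ρ hρ hretr z₀ hz₀ hfix
end

section
/- For n ≥ 2, the polydisc Δⁿ = {z ∈ ℂⁿ : |zᵢ| < 1 for all i} and the Euclidean ball Bₙ = {z ∈ ℂⁿ : |z₁|² + ... + |zₙ|² < 1} are not biholomorphically equivalent. -/
/-!
If `f` maps the polydisc biholomorphically onto the ball, it is proper, so `f (ζ, w, 0, …)` tends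
to the unit sphere as `|w| → 1`. Since the sphere is strictly convex, a holomorphic disc in the
ball whose centre is close to the sphere stays close to its centre (Borel–Carathéodory applied to
its component along the centre). Hence `w ↦ f (ζ, w, 0, …) - f (0, w, 0, …)` tends to `0` at the
unit circle, so it vanishes by the maximum principle, and `f` is not injective.
-/

open Complex Metric Set Filter Topology

theorem Complex.norm_sub_apply_zero_le_of_mapsTo_ball {h : ℂ → ℂ}
    (hd : DifferentiableOn ℂ h (ball 0 1)) (hm : MapsTo h (ball 0 1) (ball 0 1)) {z : ℂ}
    (hz : z ∈ ball 0 1) : ‖h z - h 0‖ ≤ 2 * (1 - (h 0).re) * ‖z‖ / (1 - ‖z‖) := by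
  have hre : ∀ ζ ∈ ball (0 : ℂ) 1, (h ζ).re < 1 := fun ζ hζ =>
    (re_le_norm _).trans_lt (mem_ball_zero_iff.1 (hm hζ))
  refine borelCaratheodory_zero (f := fun ζ => h ζ - h 0)
    (by linarith [hre 0 (mem_ball_self one_pos)]) (hd.sub_const _) (fun ζ hζ => ?_) one_pos hz
    (sub_self _)
  simp only [mem_ofPred_eq, sub_re]
  linarith [hre ζ hζ]

variable {E : Type*} [NormedAddCommGroup E] [InnerProductSpace ℂ E]

theorem norm_sub_sq_le_two_mul_one_sub_re_inner {x q : E} (hx : ‖x‖ ≤ 1) (hq : ‖q‖ = 1) :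
    ‖x - q‖ ^ 2 ≤ 2 * (1 - (inner ℂ q x).re) := by
  rw [norm_sub_sq (𝕜 := ℂ), hq, ← inner_re_symm (𝕜 := ℂ)]
  have := pow_le_one₀ (norm_nonneg x) hx (n := 2)
  simp only [RCLike.re_to_complex]
  linarith

theorem norm_sub_apply_zero_le_add_sqrt_of_mapsTo_ball {F : ℂ → E}
    (hd : DifferentiableOn ℂ F (ball 0 1)) (hm : MapsTo F (ball 0 1) (ball 0 1)) {z : ℂ}
    (hz : z ∈ ball 0 1) :
    ‖F z - F 0‖ ≤ (1 - ‖F 0‖) + √(2 * (1 - ‖F 0‖) * ((1 + ‖z‖) / (1 - ‖z‖))) := by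
  set p := F 0
  have hz1 : ‖z‖ < 1 := mem_ball_zero_iff.1 hz
  have hFz : ‖F z‖ < 1 := mem_ball_zero_iff.1 (hm hz)
  have hp1 : ‖p‖ ≤ 1 := (mem_ball_zero_iff.1 (hm (mem_ball_self one_pos))).le
  rcases eq_or_ne p 0 with hp | hp
  · rw [hp, sub_zero, norm_zero, sub_zero]
    linarith [Real.sqrt_nonneg (2 * 1 * ((1 + ‖z‖) / (1 - ‖z‖)))]
  set q : E := ((‖p‖⁻¹ : ℝ) : ℂ) • p
  have hq : ‖q‖ = 1 := by simp [q, norm_smul, hp]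
  have hpq : p = ((‖p‖ : ℝ) : ℂ) • q := by simp [q, smul_smul, hp]
  set h : ℂ → ℂ := fun ζ => inner ℂ q (F ζ)
  have hh0 : h 0 = ‖p‖ := by
    change inner ℂ q p = _
    have : (‖p‖ : ℂ) ≠ 0 := ofReal_ne_zero.2 (norm_ne_zero_iff.2 hp)
    simp only [q, inner_smul_left, inner_self_eq_norm_sq_to_K, conj_ofReal,
      RCLike.ofReal_eq_complex_ofReal]
    push_cast
    field_simp
  have hhd : DifferentiableOn ℂ h (ball 0 1) :=
    (innerSL ℂ q).differentiable.comp_differentiableOn hd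
  have hhm : MapsTo h (ball 0 1) (ball 0 1) := fun ζ hζ => mem_ball_zero_iff.2 <|
    (norm_inner_le_norm q (F ζ)).trans_lt (by rw [hq, one_mul]; exact mem_ball_zero_iff.1 (hm hζ))
  have hBC := Complex.norm_sub_apply_zero_le_of_mapsTo_ball hhd hhm hz
  rw [hh0, ofReal_re] at hBC
  have hre : ‖p‖ - 2 * (1 - ‖p‖) * ‖z‖ / (1 - ‖z‖) ≤ (inner ℂ q (F z)).re := by
    have := (abs_re_le_norm (h z - ‖p‖)).trans hBC
    rw [sub_re, ofReal_re] at this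
    linarith [neg_abs_le ((h z).re - ‖p‖)]
  have hFq : ‖F z - q‖ ≤ √(2 * (1 - ‖p‖) * ((1 + ‖z‖) / (1 - ‖z‖))) := by
    refine Real.le_sqrt_of_sq_le ((norm_sub_sq_le_two_mul_one_sub_re_inner hFz.le hq).trans ?_)
    have : 2 * (1 - ‖p‖) * ((1 + ‖z‖) / (1 - ‖z‖))
        = 2 * (1 - ‖p‖) + 2 * (2 * (1 - ‖p‖) * ‖z‖ / (1 - ‖z‖)) := by
      field_simp [(sub_pos.2 hz1).ne']; ring
    linarith
  have hqp : ‖q - p‖ = 1 - ‖p‖ := by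
    have : ((1 - ‖p‖ : ℝ) : ℂ) • q = q - p := by
      rw [ofReal_sub, ofReal_one, sub_smul, one_smul, ← hpq]
    rw [← this, norm_smul, hq, mul_one, norm_real, Real.norm_of_nonneg (sub_nonneg.2 hp1)]
  calc ‖F z - p‖ ≤ ‖F z - q‖ + ‖q - p‖ := norm_sub_le_norm_sub_add_norm_sub _ _ _
    _ ≤ _ := by rw [hqp, add_comm]; gcongr

theorem eqOn_zero_of_tendsto_comap_norm_nhdsLT_one {V : Type*} [NormedAddCommGroup V]
    [NormedSpace ℂ V] {u : ℂ → V} (hd : DifferentiableOn ℂ u (ball 0 1))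
    (hu : Tendsto u (comap norm (𝓝[<] 1)) (𝓝 0)) : EqOn u 0 (ball 0 1) := by
  intro z hz
  have hz1 : ‖z‖ < 1 := mem_ball_zero_iff.1 hz
  refine norm_le_zero_iff.1 (le_of_forall_pos_le_add fun ε hε => ?_)
  obtain ⟨s, hs, hsu⟩ := mem_comap.1 (hu (closedBall_mem_nhds 0 hε))
  obtain ⟨r, hr, hrs⟩ := mem_nhdsLT_iff_exists_Ioo_subset.1 hs
  obtain ⟨ρ, hρ, hρ1⟩ := exists_between (max_lt hr hz1)
  have hρ0 : 0 < ρ := (norm_nonneg z).trans_lt ((le_max_right _ _).trans_lt hρ)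
  have hdc : DiffContOnCl ℂ u (ball 0 ρ) := (hd.mono <| by
    rw [closure_ball 0 hρ0.ne']; exact closedBall_subset_ball hρ1).diffContOnCl
  have hfr : ∀ w ∈ frontier (ball (0 : ℂ) ρ), ‖u w‖ ≤ ε := by
    intro w hw
    rw [frontier_ball 0 hρ0.ne', mem_sphere_zero_iff_norm] at hw
    have : w ∈ norm ⁻¹' s := hrs ⟨hw ▸ (le_max_left _ _).trans_lt hρ, hw ▸ hρ1⟩
    simpa using hsu this
  simpa using Complex.norm_le_of_forall_mem_frontier_norm_le isBounded_ball hdc hfr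
    (subset_closure (mem_ball_zero_iff.2 ((le_max_right _ _).trans_lt hρ)))

theorem tendsto_norm_nhds_one_of_leftInvOn {X F : Type*} [TopologicalSpace X]
    [NormedAddCommGroup F] [ProperSpace F] {f : X → F} {g : F → X} {S : Set X} {φ : X → ℝ}
    (hg : ContinuousOn g (ball 0 1)) (hgS : MapsTo g (ball 0 1) S) (hfS : MapsTo f S (ball 0 1))
    (hgf : LeftInvOn g f S) (hφ : Continuous φ) (hφS : ∀ x ∈ S, φ x < 1) :
    Tendsto (fun x => ‖f x‖) (comap φ (𝓝[<] 1) ⊓ 𝓟 S) (𝓝 1) := by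
  have hS : ∀ᶠ x in comap φ (𝓝[<] 1) ⊓ 𝓟 S, x ∈ S := mem_inf_of_right (mem_principal_self S)
  refine tendsto_order.2 ⟨fun a ha => ?_, fun b hb => hS.mono fun x hx =>
    (mem_ball_zero_iff.1 (hfS hx)).trans hb⟩
  set ρ := max a 0
  have hρ : closedBall (0 : F) ρ ⊆ ball 0 1 := closedBall_subset_ball (max_lt ha one_pos)
  -- `f` can be small only on the compact set `K`, on which `φ` stays below some `r < 1`
  set K := g '' closedBall 0 ρ
  have hK : IsCompact K := (isCompact_closedBall 0 ρ).image_of_continuousOn (hg.mono hρ)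
  obtain ⟨m, hmK, hmax⟩ := hK.exists_isMaxOn ⟨g 0, mem_image_of_mem g
    (mem_closedBall_self (le_max_right a 0))⟩ hφ.continuousOn
  have hr : φ m < 1 := by
    obtain ⟨y, hy, rfl⟩ := hmK
    exact hφS _ (hgS (hρ hy))
  have hlarge : ∀ᶠ x in comap φ (𝓝[<] 1) ⊓ 𝓟 S, φ x ∈ Ioo (φ m) 1 :=
    mem_inf_of_left (preimage_mem_comap (Ioo_mem_nhdsLT hr))
  filter_upwards [hS, hlarge] with x hx hxm
  by_contra! hfx
  have hxK : x ∈ K := ⟨f x, mem_closedBall_zero_iff.2 ((le_max_left a 0).trans' hfx), hgf hx⟩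
  exact (hmax hxK).not_gt hxm.1

theorem eqOn_of_tendsto_norm_one {F : ℂ → ℂ → E}
    (hd₁ : ∀ w ∈ ball (0 : ℂ) 1, DifferentiableOn ℂ (F · w) (ball 0 1))
    (hd₂ : ∀ ζ ∈ ball (0 : ℂ) 1, DifferentiableOn ℂ (F ζ) (ball 0 1))
    (hm : ∀ w ∈ ball (0 : ℂ) 1, MapsTo (F · w) (ball 0 1) (ball 0 1))
    (hF : Tendsto (fun w => ‖F 0 w‖) (comap norm (𝓝[<] 1)) (𝓝 1))
    {ζ : ℂ} (hζ : ζ ∈ ball 0 1) : EqOn (F ζ) (F 0) (ball 0 1) := by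
  set c := (1 + ‖ζ‖) / (1 - ‖ζ‖)
  have hball : ∀ᶠ w : ℂ in comap norm (𝓝[<] (1 : ℝ)), w ∈ ball 0 1 := by
    filter_upwards [preimage_mem_comap self_mem_nhdsWithin] with w hw
    exact mem_ball_zero_iff.2 hw
  have hbound : ∀ᶠ w : ℂ in comap norm (𝓝[<] (1 : ℝ)), ‖F ζ w - F 0 w‖ ≤
      (1 - ‖F 0 w‖) + √(2 * (1 - ‖F 0 w‖) * c) :=
    hball.mono fun w hw => norm_sub_apply_zero_le_add_sqrt_of_mapsTo_ball (hd₁ w hw) (hm w hw) hζ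
  have hgap : Tendsto (fun w => 1 - ‖F 0 w‖) (comap norm (𝓝[<] 1)) (𝓝 0) := by
    simpa using tendsto_const_nhds (x := (1 : ℝ)).sub hF
  have hlim : Tendsto (fun w => (1 - ‖F 0 w‖) + √(2 * (1 - ‖F 0 w‖) * c))
      (comap norm (𝓝[<] 1)) (𝓝 0) := by
    simpa using hgap.add ((hgap.const_mul 2).mul_const c).sqrt
  intro w hw
  exact sub_eq_zero.1 <| eqOn_zero_of_tendsto_comap_norm_nhdsLT_one
    ((hd₂ ζ hζ).sub (hd₂ 0 (mem_ball_self one_pos))) (squeeze_zero_norm' hbound hlim) hw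

section Slice

variable {ι : Type*} [DecidableEq ι]

noncomputable def polydiscSlice (i j : ι) (ζ w : ℂ) : EuclideanSpace ℂ ι :=
  ζ • EuclideanSpace.single i 1 + w • EuclideanSpace.single j 1

variable {i j : ι}

theorem polydiscSlice_apply_left (hij : i ≠ j) (ζ w : ℂ) : polydiscSlice i j ζ w i = ζ := by
  simp [polydiscSlice, hij]

theorem polydiscSlice_apply_right (hij : i ≠ j) (ζ w : ℂ) : polydiscSlice i j ζ w j = w := by
  simp [polydiscSlice, hij.symm]

theorem differentiable_polydiscSlice_left [Fintype ι] (w : ℂ) :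
    Differentiable ℂ (polydiscSlice (ι := ι) i j · w) := by
  unfold polydiscSlice; fun_prop

theorem differentiable_polydiscSlice_right [Fintype ι] (ζ : ℂ) :
    Differentiable ℂ (polydiscSlice (ι := ι) i j ζ) := by
  unfold polydiscSlice; fun_prop

theorem polydiscSlice_mem (hij : i ≠ j) {ζ w : ℂ} (hζ : ζ ∈ ball (0 : ℂ) 1)
    (hw : w ∈ ball (0 : ℂ) 1) :
    polydiscSlice i j ζ w ∈ {z : EuclideanSpace ℂ ι | ∀ k, ‖z k‖ < 1} := by
  intro k
  rcases eq_or_ne k i with rfl | hki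
  · simpa [polydiscSlice_apply_left hij] using hζ
  rcases eq_or_ne k j with rfl | hkj
  · simpa [polydiscSlice_apply_right hij] using hw
  simp [polydiscSlice, hki, hkj]

theorem tendsto_polydiscSlice_zero [Fintype ι] (hij : i ≠ j) :
    Tendsto (polydiscSlice i j 0) (comap norm (𝓝[<] 1))
      (comap (fun z : EuclideanSpace ℂ ι => ‖z j‖) (𝓝[<] 1) ⊓
        𝓟 {z : EuclideanSpace ℂ ι | ∀ k, ‖z k‖ < 1}) := by
  refine tendsto_inf.2 ⟨tendsto_comap_iff.2 ?_, tendsto_principal.2 ?_⟩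
  · simpa [Function.comp_def, polydiscSlice_apply_right hij] using tendsto_comap
  · filter_upwards [preimage_mem_comap self_mem_nhdsWithin] with w hw
    exact polydiscSlice_mem hij (mem_ball_self one_pos) (mem_ball_zero_iff.2 hw)

end Slice

/-- Poincaré's theorem: for `n ≥ 2`, the polydisc and the Euclidean ball in `ℂⁿ`
are not biholomorphically equivalent. -/
theorem polydisc_not_biholomorphic_to_ball (n : ℕ) (hn : 2 ≤ n) :
    ¬ ∃ f g : EuclideanSpace ℂ (Fin n) → EuclideanSpace ℂ (Fin n),
      DifferentiableOn ℂ f {z : EuclideanSpace ℂ (Fin n) | ∀ i, ‖z i‖ < 1} ∧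
      MapsTo f {z : EuclideanSpace ℂ (Fin n) | ∀ i, ‖z i‖ < 1}
        (ball (0 : EuclideanSpace ℂ (Fin n)) 1) ∧
      DifferentiableOn ℂ g (ball (0 : EuclideanSpace ℂ (Fin n)) 1) ∧
      MapsTo g (ball (0 : EuclideanSpace ℂ (Fin n)) 1)
        {z : EuclideanSpace ℂ (Fin n) | ∀ i, ‖z i‖ < 1} ∧
      (∀ z ∈ {z : EuclideanSpace ℂ (Fin n) | ∀ i, ‖z i‖ < 1}, g (f z) = z) ∧
      (∀ w ∈ ball (0 : EuclideanSpace ℂ (Fin n)) 1, f (g w) = w) := by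
  rintro ⟨f, g, hf, hfm, hg, hgm, hgf, -⟩
  obtain ⟨i, j, hij⟩ : ∃ i j : Fin n, i ≠ j := ⟨⟨0, by omega⟩, ⟨1, by omega⟩, by simp⟩
  have hmem {ζ w : ℂ} := polydiscSlice_mem (ζ := ζ) (w := w) hij
  have hproper : Tendsto (fun w => ‖f (polydiscSlice i j 0 w)‖) (comap norm (𝓝[<] 1)) (𝓝 1) :=
    (tendsto_norm_nhds_one_of_leftInvOn hg.continuousOn hgm hfm hgf
      (continuous_norm.comp (EuclideanSpace.proj j).continuous) fun z hz => hz j).comp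
      (tendsto_polydiscSlice_zero hij)
  have hslice := eqOn_of_tendsto_norm_one (F := fun ζ w => f (polydiscSlice i j ζ w))
    (fun w hw => hf.comp (differentiable_polydiscSlice_left w).differentiableOn
      fun ζ hζ => hmem hζ hw)
    (fun ζ hζ => hf.comp (differentiable_polydiscSlice_right ζ).differentiableOn
      fun w hw => hmem hζ hw)
    (fun w hw ζ hζ => hfm (hmem hζ hw)) hproper (ζ := 1 / 2) (by norm_num)
    (mem_ball_self one_pos)
  have hinj : polydiscSlice i j (1 / 2) 0 = polydiscSlice i j 0 0 := by
    rw [← hgf _ (hmem (by norm_num) (mem_ball_self one_pos)),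
      ← hgf _ (hmem (mem_ball_self one_pos) (mem_ball_self one_pos))]
    exact congrArg g hslice
  simpa [polydiscSlice_apply_left hij] using congrArg (· i) hinj
end

section
/- Let B be the open unit ball of ℂⁿ for a norm ‖·‖ and let v ∈ ∂B be a complex extreme point of the closed ball. If φ: Δ → closure(B) is holomorphic with φ(0) = 0 and φ'(0) = v, then φ(ζ) = ζ·v for all ζ ∈ Δ. -/
/-!
Write `φ ζ = ζ • g ζ` with `g = dslope φ 0`; by the Schwarz lemma `g` maps the disc into the
closed unit ball, and `g 0 = v`. On a circle `|z| = r < 1`, average `g` against the weight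
`1 + Re (μ (r / z) ^ n)`, `‖μ‖ ≤ 1`, which is nonnegative of mean one. Since `g` is holomorphic
this average is `v + (μ / 2) rⁿ aₙ`, with `aₙ` the `n`-th Taylor coefficient of `g`, and as an
average of points of the closed ball it has norm at most one. Thus `v + ζ (rⁿ aₙ / 2)` lies in
the closed ball for all `‖ζ‖ < 1`, and complex extremality of `v` forces `aₙ = 0` for `n ≥ 1`,
so `g ≡ v`.
-/

open Complex ComplexConjugate Metric Set Real

theorem norm_circleAverage_le_of_norm_le {E : Type*} [NormedAddCommGroup E] [NormedSpace ℝ E]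
    {F : ℂ → E} {g : ℂ → ℝ} {c : ℂ} {R : ℝ} (hg : CircleIntegrable g c R)
    (hFg : ∀ z ∈ sphere c |R|, ‖F z‖ ≤ g z) :
    ‖circleAverage F c R‖ ≤ circleAverage g c R := by
  rw [circleAverage_def, circleAverage_def, norm_smul, Real.norm_of_nonneg (by positivity),
    smul_eq_mul]
  gcongr
  exact intervalIntegral.norm_integral_le_of_norm_le two_pi_pos.le
    (.of_forall fun θ _ => hFg _ (circleMap_mem_sphere' c R θ)) hg

theorem circleAverage_zpow_eq_zero (R : ℝ) {k : ℤ} (hk : k ≠ 0) :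
    circleAverage (fun z => z ^ k) 0 R = 0 := by
  rw [← circleAverage_abs_radius]
  rcases eq_or_ne R 0 with rfl | hR
  · simp [zero_zpow k hk]
  have hR' : |R| ≠ 0 := abs_ne_zero.mpr hR
  have hpow : EqOn (fun z : ℂ => (z - 0)⁻¹ • z ^ k) (fun z => (z - 0) ^ (k - 1))
      (sphere 0 |R|) := fun z hz => by
    have hz0 : z ≠ 0 := ne_zero_of_mem_sphere hR' ⟨z, hz⟩
    simp [zpow_sub₀ hz0, div_eq_inv_mul]
  rw [circleAverage_eq_circleIntegral hR', circleIntegral.integral_congr (abs_nonneg R) hpow,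
    circleIntegral.integral_sub_zpow_of_ne (by omega), smul_zero]

theorem conj_div_eq_div_of_mem_sphere {R : ℝ} {z : ℂ} (hz : z ∈ sphere (0 : ℂ) |R|) :
    conj ((R : ℂ) / z) = z / R := by
  rcases eq_or_ne R 0 with rfl | hR
  · simp_all
  have hz0 : z ≠ 0 := ne_zero_of_mem_sphere (abs_ne_zero.mpr hR) ⟨z, hz⟩
  have hzz : z * conj z = (R : ℂ) ^ 2 := by
    rw [mul_conj, normSq_eq_norm_sq, mem_sphere_zero_iff_norm.mp hz, sq_abs]
    push_cast; ring
  rw [map_div₀, conj_ofReal]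
  field_simp [hz0, (map_ne_zero _).mpr hz0, ofReal_ne_zero.mpr hR]
  linear_combination -hzz

/-- On `z = R e^{iθ}` this is `1 + Re (μ e^{-inθ})`: for `‖μ‖ ≤ 1` a nonnegative weight of mean
one whose pairing with a function holomorphic on the disc sees only its value at `0` and its
`n`-th Taylor coefficient. -/
noncomputable def circleKernel (R : ℝ) (n : ℕ) (μ z : ℂ) : ℝ := 1 + (μ * (R / z) ^ n).re

theorem ofReal_circleKernel {R : ℝ} {z : ℂ} (hz : z ∈ sphere (0 : ℂ) |R|) (n : ℕ) (μ : ℂ) :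
    (circleKernel R n μ z : ℂ) = 1 + μ / 2 * (R / z) ^ n + conj μ / 2 * (z / R) ^ n := by
  rw [circleKernel, ofReal_add, ofReal_one, re_eq_add_conj, map_mul, map_pow,
    conj_div_eq_div_of_mem_sphere hz]
  ring

theorem circleKernel_nonneg {R : ℝ} {z : ℂ} (hz : z ∈ sphere (0 : ℂ) |R|) (n : ℕ) {μ : ℂ}
    (hμ : ‖μ‖ ≤ 1) : 0 ≤ circleKernel R n μ z := by
  have hq : ‖((R : ℂ) / z) ^ n‖ ≤ 1 := by
    rw [norm_pow, norm_div, norm_real, Real.norm_eq_abs, mem_sphere_zero_iff_norm.mp hz]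
    exact pow_le_one₀ (by positivity) (div_self_le_one _)
  have hre := (abs_re_le_norm (μ * (R / z) ^ n)).trans
    ((norm_mul_le _ _).trans (mul_le_one₀ hμ (norm_nonneg _) hq))
  rw [circleKernel]
  linarith [neg_abs_le (μ * (R / z) ^ n).re]

theorem continuousOn_circleKernel {R : ℝ} (hR : R ≠ 0) (n : ℕ) (μ : ℂ) :
    ContinuousOn (circleKernel R n μ) (sphere 0 |R|) := by
  have hz0 : ∀ z ∈ sphere (0 : ℂ) |R|, z ≠ 0 := fun z hz =>
    ne_zero_of_mem_sphere (abs_ne_zero.mpr hR) ⟨z, hz⟩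
  unfold circleKernel
  fun_prop (disch := assumption)

section

variable {E : Type*} [NormedAddCommGroup E] [NormedSpace ℂ E]

def IsComplexExtremePoint (A : Set E) (x : E) : Prop :=
  ∀ y : E, (∀ ζ : ℂ, ‖ζ‖ < 1 → x + ζ • y ∈ A) → y = 0

theorem cauchyPowerSeries_apply_eq_circleAverage (f : ℂ → E) (c : ℂ) {R : ℝ} (hR : R ≠ 0) (n : ℕ)
    (w : ℂ) : (cauchyPowerSeries f c R n fun _ => w) =
      circleAverage (fun z => (w / (z - c)) ^ n • f z) c R := by
  rw [cauchyPowerSeries_apply, circleAverage_eq_circleIntegral hR]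
  simp only [smul_comm (_ ^ n : ℂ)]

variable [CompleteSpace E]

theorem circleAverage_pow_smul_eq_zero {f : ℂ → E} {R : ℝ} (hf : DiffContOnCl ℂ f (ball 0 |R|))
    {n : ℕ} (hn : n ≠ 0) : circleAverage (fun z => z ^ n • f z) 0 R = 0 := by
  rw [((differentiable_pow n).diffContOnCl.smul hf).circleAverage]
  simp [hn]

theorem eq_apply_zero_of_circleAverage_div_pow_smul_eq_zero {f : ℂ → E} {R : ℝ} (hR : 0 < R)
    (hf : DiffContOnCl ℂ f (ball 0 R))
    (hcoeff : ∀ n ≠ 0, circleAverage (fun z => (R / z) ^ n • f z) 0 R = 0) :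
    ∀ z ∈ ball (0 : ℂ) R, f z = f 0 := by
  lift R to NNReal using hR.le
  intro z hz
  have hps := hf.hasFPowerSeriesOnBall hR
  have hterm : ∀ n ≠ 0, cauchyPowerSeries f 0 R n (fun _ => z) = 0 := fun n hn => by
    have hscale : (fun w : ℂ => (z / (w - 0)) ^ n • f w) =
        fun w : ℂ => (z / R) ^ n • ((R / w) ^ n • f w) := by
      ext w
      rw [sub_zero, smul_smul, ← mul_pow, div_mul_div_cancel₀ (ofReal_ne_zero.mpr hR.ne')]
    rw [cauchyPowerSeries_apply_eq_circleAverage f 0 hR.ne', hscale, circleAverage_fun_smul,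
      hcoeff n hn, smul_zero]
  have hsum := hps.hasSum (by simpa [Metric.eball_coe] using hz)
  rw [zero_add] at hsum
  rw [hsum.unique (hasSum_single 0 hterm), hps.coeff_zero]

theorem circleAverage_circleKernel_smul {f : ℂ → E} {R : ℝ} (hR : 0 < R)
    (hf : DiffContOnCl ℂ f (ball 0 R)) {n : ℕ} (hn : n ≠ 0) (μ : ℂ) :
    circleAverage (fun z => circleKernel R n μ z • f z) 0 R =
      f 0 + (μ / 2) • circleAverage (fun z => (R / z) ^ n • f z) 0 R := by
  rw [← abs_of_pos hR] at hf
  have hz0 : ∀ z ∈ sphere (0 : ℂ) |R|, z ≠ 0 := fun z hz =>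
    ne_zero_of_mem_sphere (abs_ne_zero.mpr hR.ne') ⟨z, hz⟩
  have hfc : ContinuousOn f (sphere 0 |R|) := hf.continuousOn_ball.mono sphere_subset_closedBall
  have hsplit : EqOn (fun z => circleKernel R n μ z • f z)
      (fun z => (f z + (μ / 2) • ((R / z) ^ n • f z)) + (conj μ / 2 / R ^ n) • (z ^ n • f z))
      (sphere 0 |R|) := fun z hz => by
    simp only
    rw [← coe_smul, ofReal_circleKernel hz, div_pow]
    module
  rw [circleAverage_congr_sphere hsplit, circleAverage_fun_add, circleAverage_fun_add,
    circleAverage_fun_smul, circleAverage_fun_smul, hf.circleAverage,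
    circleAverage_pow_smul_eq_zero hf hn, smul_zero, add_zero]
  all_goals
    apply ContinuousOn.circleIntegrable'
    fun_prop (disch := assumption)

theorem circleAverage_circleKernel {R : ℝ} (hR : 0 < R) {n : ℕ} (hn : n ≠ 0) (μ : ℂ) :
    circleAverage (circleKernel R n μ) 0 R = 1 := by
  have hq : circleAverage (fun z : ℂ => (R / z) ^ n) 0 R = 0 := by
    have hpow : (fun z : ℂ => (R / z) ^ n) = fun z => (R : ℂ) ^ n • z ^ (-n : ℤ) := by
      ext z
      rw [zpow_neg, zpow_natCast, div_pow, smul_eq_mul, div_eq_mul_inv]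
    rw [hpow, circleAverage_fun_smul, circleAverage_zpow_eq_zero R (by omega), smul_zero]
  have hsmul := circleAverage_circleKernel_smul hR (diffContOnCl_const (c := (1 : ℂ))) hn μ
  simp only [smul_eq_mul, mul_one, hq, mul_zero, add_zero, ← coe_smul] at hsmul
  apply ofReal_injective
  rw [ofReal_one, ← hsmul, ← ofRealCLM_apply, ← ofRealCLM.circleAverage_comp_comm]
  · rfl
  · exact (continuousOn_circleKernel hR.ne' n μ).circleIntegrable'

theorem norm_add_smul_circleAverage_div_pow_smul_le {f : ℂ → E} {R M : ℝ} (hR : 0 < R)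
    (hf : DiffContOnCl ℂ f (ball 0 R)) (hfM : ∀ z ∈ sphere (0 : ℂ) R, ‖f z‖ ≤ M) {n : ℕ}
    (hn : n ≠ 0) {μ : ℂ} (hμ : ‖μ‖ ≤ 1) :
    ‖f 0 + (μ / 2) • circleAverage (fun z => (R / z) ^ n • f z) 0 R‖ ≤ M := by
  rw [← circleAverage_circleKernel_smul hR hf hn]
  calc _ ≤ circleAverage (fun z => M * circleKernel R n μ z) 0 R := by
        refine norm_circleAverage_le_of_norm_le
          ((continuousOn_circleKernel hR.ne' n μ).const_smul M).circleIntegrable' fun z hz => ?_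
        rw [norm_smul, Real.norm_of_nonneg (circleKernel_nonneg hz n hμ), mul_comm]
        exact mul_le_mul_of_nonneg_right (hfM z (abs_of_pos hR ▸ hz))
          (circleKernel_nonneg hz n hμ)
    _ = M := by
        simp only [← smul_eq_mul (a := M)]
        rw [circleAverage_fun_smul, circleAverage_circleKernel hR hn, smul_eq_mul, mul_one]

theorem eq_apply_zero_of_isComplexExtremePoint {g : ℂ → E} {ρ M : ℝ}
    (hg : DifferentiableOn ℂ g (ball 0 ρ)) (hgM : MapsTo g (ball 0 ρ) (closedBall 0 M))
    (hext : IsComplexExtremePoint (closedBall 0 M) (g 0)) :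
    ∀ z ∈ ball (0 : ℂ) ρ, g z = g 0 := by
  intro z hz
  obtain ⟨r, hzr, hrρ⟩ := exists_between (mem_ball_zero_iff.mp hz)
  have hr : 0 < r := (norm_nonneg z).trans_lt hzr
  have hgr : DiffContOnCl ℂ g (ball 0 r) := hg.diffContOnCl_ball (closedBall_subset_ball hrρ)
  refine eq_apply_zero_of_circleAverage_div_pow_smul_eq_zero hr hgr (fun n hn => ?_) z
    (mem_ball_zero_iff.mpr hzr)
  have hhalf : (2⁻¹ : ℂ) • circleAverage (fun w => (r / w) ^ n • g w) 0 r = 0 :=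
    hext _ fun ζ hζ => by
      rw [smul_smul, ← div_eq_mul_inv, mem_closedBall_zero_iff]
      exact norm_add_smul_circleAverage_div_pow_smul_le hr hgr
        (fun w hw => mem_closedBall_zero_iff.mp
          (hgM (sphere_subset_closedBall.trans (closedBall_subset_ball hrρ) hw))) hn hζ.le
  simpa using hhalf

end

theorem geodesic_through_complex_extreme_point_unique_general
    {E : Type*} [NormedAddCommGroup E] [NormedSpace ℂ E] [FiniteDimensional ℂ E]
    (v : E)
    (hext : ∀ y : E, (∀ ζ : ℂ, ‖ζ‖ < 1 → v + ζ • y ∈ closedBall (0 : E) 1)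
      → y = 0)
    (φ : ℂ → E)
    (hφ : DifferentiableOn ℂ φ (ball 0 1))
    (hφm : MapsTo φ (ball 0 1) (closedBall (0 : E) 1))
    (hφ0 : φ 0 = 0) (hφ' : deriv φ 0 = v) :
    ∀ ζ ∈ ball (0 : ℂ) 1, φ ζ = ζ • v := by
  have := FiniteDimensional.complete ℂ E
  have hg : DifferentiableOn ℂ (dslope φ 0) (ball 0 1) :=
    (differentiableOn_dslope (isOpen_ball.mem_nhds (mem_ball_self one_pos))).mpr hφ
  have hg0 : dslope φ 0 0 = v := by rw [dslope_same, hφ']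
  have hgM : MapsTo (dslope φ 0) (ball 0 1) (closedBall 0 1) := fun z hz => by
    simpa using norm_dslope_le_div_of_mapsTo_ball hφ (hφ0 ▸ hφm) hz
  intro ζ hζ
  have hgζ := eq_apply_zero_of_isComplexExtremePoint hg hgM (hg0 ▸ hext) ζ hζ
  calc φ ζ = (ζ - 0) • dslope φ 0 ζ + φ 0 := by rw [sub_smul_dslope, sub_add_cancel]
    _ = ζ • v := by rw [hgζ, hg0, hφ0, sub_zero, add_zero]

/-- Uniqueness of the complex geodesic through the origin in the direction of a
complex extreme point of the closed unit ball. -/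
theorem geodesic_through_complex_extreme_point_unique
    {E : Type*} [NormedAddCommGroup E] [NormedSpace ℂ E] [FiniteDimensional ℂ E]
    (v : E) (hv : ‖v‖ = 1)
    (hext : ∀ y : E, (∀ ζ : ℂ, ‖ζ‖ < 1 → v + ζ • y ∈ closedBall (0 : E) 1)
      → y = 0)
    (φ : ℂ → E)
    (hφ : DifferentiableOn ℂ φ (ball 0 1))
    (hφm : MapsTo φ (ball 0 1) (closedBall (0 : E) 1))
    (hφ0 : φ 0 = 0) (hφ' : deriv φ 0 = v) :
    ∀ ζ ∈ ball (0 : ℂ) 1, φ ζ = ζ • v :=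
  geodesic_through_complex_extreme_point_unique_general v hext φ hφ hφm hφ0 hφ'
end
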